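/- arXiv:2507.07094 — 12 statements merged into one kernel-verified Lean document; each statement's English description precedes it below -/
import Mathlib

section
/- Let N, A, B, a1, a2, b1, b2 be positive integers with a1 < a2 and b1 < b2 such that N = A·B = (A + a1)·(B − b1) = (A + a2)·(B − b2). If max(a2, b2) ≥ 5, then A ≤ (1/4)·max(a2, b2)·(max(a2, b2) − 1)² and B ≤ (1/4)·max(a2, b2)·(max(a2, b2) − 1)². -/
private lemma aux_le (c t r : ℤ) (h : c * t = r) (hc : 0 < c) (hr : 0 < r) : c ≤ r := by
  have ht : 0 < t := by nlinarith
  nlinarith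

set_option maxHeartbeats 1000000 in
theorem stmt_0 (N A B a1 a2 b1 b2 : ℤ)
    (hN : 0 < N) (hA : 0 < A) (hB : 0 < B)
    (ha1 : 0 < a1) (hb1 : 0 < b1) (ha : a1 < a2) (hb : b1 < b2)
    (h1 : N = A * B) (h2 : N = (A + a1) * (B - b1)) (h3 : N = (A + a2) * (B - b2))
    (hmax : 5 ≤ max a2 b2) :
    (A : ℝ) ≤ (1 / 4) * ((max a2 b2 : ℤ) : ℝ) * (((max a2 b2 : ℤ) : ℝ) - 1) ^ 2 ∧
    (B : ℝ) ≤ (1 / 4) * ((max a2 b2 : ℤ) : ℝ) * (((max a2 b2 : ℤ) : ℝ) - 1) ^ 2 := by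
  have ha2 : 0 < a2 := ha1.trans ha
  have hb2 : 0 < b2 := hb1.trans hb
  obtain ⟨M, hM⟩ : ∃ M, max a2 b2 = M := ⟨_, rfl⟩
  rw [hM]
  have hMa : a2 ≤ M := hM ▸ le_max_left _ _
  have hMb : b2 ≤ M := hM ▸ le_max_right _ _
  have hMc : M = a2 ∨ M = b2 := by
    rcases max_choice a2 b2 with h | h
    · exact Or.inl (hM.symm.trans h)
    · exact Or.inr (hM.symm.trans h)
  have hM5 : 5 ≤ M := hM ▸ hmax
  clear hM hmax
  have hy : 0 < b2 - b1 := by linarith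
  have hx : 0 < a2 - a1 := by linarith
  have e1 : a1 * B = b1 * A + a1 * b1 := by linear_combination h1 - h2
  have e2 : a2 * B = b2 * A + a2 * b2 := by linear_combination h1 - h3
  obtain ⟨D, hDdef⟩ : ∃ D, a2 * b1 - a1 * b2 = D := ⟨_, rfl⟩
  have eA : A * D = a1 * a2 * (b2 - b1) := by linear_combination a1 * e2 - a2 * e1 - A * hDdef
  have eB : B * D = b1 * b2 * (a2 - a1) := by linear_combination b1 * e2 - b2 * e1 - B * hDdef
  have hDpos : 0 < D := by
    have h0 : 0 < A * D := by rw [eA]; exact mul_pos (mul_pos ha1 ha2) hy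
    nlinarith
  have hD : 1 ≤ D := hDpos
  have hbx : b1 * (a2 - a1) = a1 * (b2 - b1) + D := by linear_combination hDdef
  clear h1 h2 h3 e1 e2 hN
  clear N
  -- sum bound
  have hsum : a1 + (b2 - b1) ≤ M - 1 := by
    have hexp : a2 * (b2 - b1) = a2 * b2 - a2 * b1 := by ring
    have hkey : a1 * b2 + a2 * (b2 - b1) ≤ a2 * b2 - 1 := by linarith [hD, hDdef, hexp]
    rcases hMc with hm | hm
    · -- M = a2, b2 ≤ a2
      have t : b2 * (b2 - b1) ≤ a2 * (b2 - b1) :=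
        mul_le_mul_of_nonneg_right (by linarith : b2 ≤ a2) hy.le
      have id1 : b2 * (a1 + (b2 - b1)) = a1 * b2 + b2 * (b2 - b1) := by ring
      have id2 : b2 * M = a2 * b2 := by rw [hm]; ring
      have hlt : b2 * (a1 + (b2 - b1)) < b2 * M := by linarith
      have := lt_of_mul_lt_mul_left hlt hb2.le
      omega
    · -- M = b2, a2 ≤ b2
      have t : a2 * a1 ≤ a1 * b2 := by nlinarith
      have id1 : a2 * (a1 + (b2 - b1)) = a2 * a1 + a2 * (b2 - b1) := by ring
      have id2 : a2 * M = a2 * b2 := by rw [hm]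
      have hlt : a2 * (a1 + (b2 - b1)) < a2 * M := by linarith
      have := lt_of_mul_lt_mul_left hlt ha2.le
      omega
  have hq1 : 4 * (a1 * (b2 - b1)) ≤ (M - 1) ^ 2 := by
    nlinarith [sq_nonneg (a1 - (b2 - b1)),
      mul_nonneg (sub_nonneg.mpr hsum) (show (0:ℤ) ≤ a1 + (b2 - b1) by linarith),
      mul_le_mul_of_nonneg_left hsum (show (0:ℤ) ≤ M - 1 by linarith)]
  -- A bound
  have hA4 : 4 * A ≤ M * (M - 1) ^ 2 := by
    have hkeyA : 4 * (a1 * a2 * (b2 - b1)) ≤ D * (M * (M - 1) ^ 2) := by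
      calc 4 * (a1 * a2 * (b2 - b1)) = a2 * (4 * (a1 * (b2 - b1))) := by ring
        _ ≤ a2 * (M - 1) ^ 2 := mul_le_mul_of_nonneg_left hq1 ha2.le
        _ ≤ M * (M - 1) ^ 2 := mul_le_mul_of_nonneg_right hMa (sq_nonneg _)
        _ ≤ D * (M * (M - 1) ^ 2) :=
            le_mul_of_one_le_left (mul_nonneg (by linarith) (sq_nonneg _)) hD
    have h' : (4 * A) * D ≤ (M * (M - 1) ^ 2) * D := by nlinarith [eA, hkeyA]
    exact le_of_mul_le_mul_right h' hDpos
  -- B bound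
  have hB4 : 4 * B ≤ M * (M - 1) ^ 2 := by
    have hkeyB : 4 * (b1 * b2 * (a2 - a1)) ≤ D * (M * (M - 1) ^ 2) := by
      rcases hD.lt_or_eq with hD2 | hD1
      · -- 2 ≤ D
        have h2' : 4 * (b1 * (a2 - a1)) ≤ (M - 1) ^ 2 + 4 * D := by nlinarith [hq1, hbx]
        have g1 : (16:ℤ) ≤ (M - 1) ^ 2 := by nlinarith
        have g3 : 4 * D + 8 ≤ (M - 1) ^ 2 * (D - 1) := by
          nlinarith [mul_le_mul_of_nonneg_right g1 (show (0:ℤ) ≤ D - 1 by linarith)]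
        have g4 : M * (4 * D + 8) ≤ M * ((M - 1) ^ 2 * (D - 1)) :=
          mul_le_mul_of_nonneg_left g3 (by linarith)
        calc 4 * (b1 * b2 * (a2 - a1)) = b2 * (4 * (b1 * (a2 - a1))) := by ring
          _ ≤ b2 * ((M - 1) ^ 2 + 4 * D) :=
              mul_le_mul_of_nonneg_left h2' hb2.le
          _ ≤ M * ((M - 1) ^ 2 + 4 * D) :=
              mul_le_mul_of_nonneg_right hMb (by nlinarith [sq_nonneg (M-1)])
          _ ≤ D * (M * (M - 1) ^ 2) := by nlinarith [g4, hM5]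
      · -- D = 1
        have hbx1 : b1 * (a2 - a1) = a1 * (b2 - b1) + 1 := by rw [← hD1] at hbx; exact hbx
        have hq : 4 * (b1 * (a2 - a1)) ≤ (M - 1) ^ 2 := by
          rcases (eq_or_lt_of_le hsum) with hseq | hslt
          · -- a1 + y = M - 1
            by_cases hdd : 4 ≤ (a1 - (b2 - b1)) ^ 2
            · have idq : 4 * (a1 * (b2 - b1)) = (a1 + (b2 - b1)) ^ 2 - (a1 - (b2 - b1)) ^ 2 := by
                ring
              have hsq : (a1 + (b2 - b1)) ^ 2 = (M - 1) ^ 2 := by rw [hseq]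
              linarith [hbx1, idq, hsq, hdd]
            · push_neg at hdd
              exfalso
              have hdle : a1 - (b2 - b1) ≤ 1 := by nlinarith
              have hdge : -1 ≤ a1 - (b2 - b1) := by nlinarith
              have hcase : b2 - b1 = a1 - 1 ∨ b2 - b1 = a1 ∨ b2 - b1 = a1 + 1 := by omega
              rcases hcase with hc | hc | hc <;> rcases hMc with hm | hm
              · -- y = a1 - 1, M = a2 = 2a1
                have hb2v : b2 = b1 + a1 - 1 := by omega
                have ha2v : a2 = 2 * a1 := by omega
                subst hb2v ha2v
                have hfac : a1 * (b1 - a1 + 1) = 1 := by linear_combination hbx1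
                have := aux_le _ _ _ hfac ha1 (by norm_num)
                omega
              · -- y = a1 - 1, M = b2 = 2a1, b1 = a1+1
                have hb1v : b1 = a1 + 1 := by omega
                have hb2v : b2 = 2 * a1 := by omega
                subst hb1v hb2v
                have hfac : (a1 + 1) * (a2 - 2 * a1 + 2) = 3 := by linear_combination hbx1
                have := aux_le _ _ _ hfac (by linarith) (by norm_num)
                omega
              · -- y = a1, M = a2 = 2a1+1
                have hb2v : b2 = b1 + a1 := by omega
                have ha2v : a2 = 2 * a1 + 1 := by omega
                subst hb2v ha2v
                have hfac : (a1 + 1) * (b1 - a1 + 1) = 2 := by linear_combination hbx1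
                have := aux_le _ _ _ hfac (by linarith) (by norm_num)
                omega
              · -- y = a1, M = b2 = 2a1+1, b1 = a1+1
                have hb1v : b1 = a1 + 1 := by omega
                have hb2v : b2 = 2 * a1 + 1 := by omega
                subst hb1v hb2v
                have hfac : (a1 + 1) * (a2 - 2 * a1 + 1) = 2 := by linear_combination hbx1
                have := aux_le _ _ _ hfac (by linarith) (by norm_num)
                omega
              · -- y = a1 + 1, M = a2 = 2a1+2
                have hb2v : b2 = b1 + a1 + 1 := by omega
                have ha2v : a2 = 2 * a1 + 2 := by omega
                subst hb2v ha2v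
                have hfac : (a1 + 2) * (b1 - a1 + 1) = 3 := by linear_combination hbx1
                have := aux_le _ _ _ hfac (by linarith) (by norm_num)
                omega
              · -- y = a1 + 1, M = b2 = 2a1+2, b1 = a1+1
                have hb1v : b1 = a1 + 1 := by omega
                have hb2v : b2 = 2 * a1 + 2 := by omega
                subst hb1v hb2v
                have hfac : (a1 + 1) * (a2 - 2 * a1) = 1 := by linear_combination hbx1
                have := aux_le _ _ _ hfac (by linarith) (by norm_num)
                omega
          · -- a1 + y ≤ M - 2
            have hs2 : a1 + (b2 - b1) ≤ M - 2 := by omega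
            have t1 : 4 * (a1 * (b2 - b1)) ≤ (M - 2) ^ 2 := by
              nlinarith [sq_nonneg (a1 - (b2 - b1)),
                mul_nonneg (sub_nonneg.mpr hs2) (show (0:ℤ) ≤ a1 + (b2 - b1) by linarith),
                mul_le_mul_of_nonneg_left hs2 (show (0:ℤ) ≤ M - 2 by linarith)]
            nlinarith [hbx1, t1, hM5]
        calc 4 * (b1 * b2 * (a2 - a1)) = b2 * (4 * (b1 * (a2 - a1))) := by ring
          _ ≤ b2 * (M - 1) ^ 2 := mul_le_mul_of_nonneg_left hq hb2.le
          _ ≤ M * (M - 1) ^ 2 := mul_le_mul_of_nonneg_right hMb (sq_nonneg _)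
          _ ≤ D * (M * (M - 1) ^ 2) := by rw [← hD1]; ring_nf; exact le_refl _
    have h' : (4 * B) * D ≤ (M * (M - 1) ^ 2) * D := by nlinarith [eB, hkeyB]
    exact le_of_mul_le_mul_right h' hDpos
  constructor
  · have hc : ((4 * A : ℤ) : ℝ) ≤ ((M * (M - 1) ^ 2 : ℤ) : ℝ) := Int.cast_le.mpr hA4
    push_cast at hc
    linarith
  · have hc : ((4 * B : ℤ) : ℝ) ≤ ((M * (M - 1) ^ 2 : ℤ) : ℝ) := Int.cast_le.mpr hB4
    push_cast at hc
    linarith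
end

section
/- Let N, A, B, a1, a2, b1, b2 be positive integers with a1 < a2 and b1 < b2 such that N = A·B = (A + a1)·(B − b1) = (A + a2)·(B − b2). If B² ≤ N ≤ A² (i.e., B ≤ √N ≤ A), then A ≤ (1/4)·a2·(a2 − 3)·(a2 + 1). -/
theorem stmt_2 (N A B a1 a2 b1 b2 : ℤ)
    (hN : 0 < N) (hA : 0 < A) (hB : 0 < B)
    (ha1 : 0 < a1) (hb1 : 0 < b1) (ha : a1 < a2) (hb : b1 < b2)
    (h1 : N = A * B) (h2 : N = (A + a1) * (B - b1)) (h3 : N = (A + a2) * (B - b2))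
    (hBN : B ^ 2 ≤ N) (hNA : N ≤ A ^ 2) :
    (A : ℝ) ≤ (1 / 4) * (a2 : ℝ) * ((a2 : ℝ) - 3) * ((a2 : ℝ) + 1) := by
  have hBA : B ≤ A := by nlinarith
  have e1 : a1 * B = b1 * A + a1 * b1 := by linear_combination h1 - h2
  have e2 : a2 * B = b2 * A + a2 * b2 := by linear_combination h1 - h3
  have ha2 : (0:ℤ) < a2 := by linarith
  have hb1a : b1 < a1 := by nlinarith
  have key : A * (a2 * b1 - a1 * b2) = a1 * a2 * (b2 - b1) := by
    linear_combination a1 * e2 - a2 * e1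
  have hd : 1 ≤ a2 * b1 - a1 * b2 := by nlinarith [mul_pos (mul_pos ha1 ha2) (by linarith : (0:ℤ) < b2 - b1)]
  have hstep : 4 * a1 * (b2 - b1) ≤ (a2 * b1 - a1 * b2) * ((a2 - 3) * (a2 + 1)) := by
    nlinarith [sq_nonneg (a2 - 2 * a1 + 1),
      mul_nonneg (by linarith : (0:ℤ) ≤ a2 * b1 - a1 * b2 - 1) (sq_nonneg (a2 - 1)),
      mul_nonneg (by linarith : (0:ℤ) ≤ a1 - 1 - b1) (by linarith : (0:ℤ) ≤ a2 - a1)]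
  have h4 : (4 * A) * (a2 * b1 - a1 * b2) ≤ (a2 * ((a2 - 3) * (a2 + 1))) * (a2 * b1 - a1 * b2) := by
    have := mul_le_mul_of_nonneg_left hstep (le_of_lt ha2)
    nlinarith [key]
  have hfin : 4 * A ≤ a2 * ((a2 - 3) * (a2 + 1)) :=
    le_of_mul_le_mul_right h4 (by linarith)
  have : ((4 * A : ℤ) : ℝ) ≤ ((a2 * ((a2 - 3) * (a2 + 1)) : ℤ) : ℝ) := by exact_mod_cast hfin
  push_cast at this
  linarith
end

section
/- Let N ≥ 6 be a positive integer and suppose (x1, y1), (x2, y2), (x3, y3) are three distinct lattice points on the hyperbola x·y = N, i.e., x1, x2, x3 are distinct positive integers with x_i·y_i = N for each i. Then max over i of |x_i − y_i| is at least ⌊2·N^{1/4} + 1/(2·N^{1/4} − 1)⌋, where ⌊t⌋ denotes the greatest integer not exceeding t. -/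
/-- Auxiliary lemma: if two lattice points on `x*y = N` have distinct sums,
then the one with larger sum gives the floor bound. -/
lemma stmt_5_aux (N x y x' y' M : ℤ) (hN : 6 ≤ N)
    (hx : 0 < x) (hy : 0 < y) (hx' : 0 < x') (hy' : 0 < y')
    (hxy : x * y = N) (hxy' : x' * y' = N)
    (hlt : x + y < x' + y') (hMd : |x' - y'| ≤ M) :
    ⌊2 * (N : ℝ) ^ ((1 : ℝ) / 4) + 1 / (2 * (N : ℝ) ^ ((1 : ℝ) / 4) - 1)⌋ ≤ M := by
  set t : ℝ := (N : ℝ) ^ ((1 : ℝ) / 4) with ht_def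
  have hNpos : (0 : ℝ) < (N : ℝ) := by exact_mod_cast lt_of_lt_of_le (by norm_num) hN
  have ht0 : 0 ≤ t := Real.rpow_nonneg (le_of_lt hNpos) _
  have ht4 : t ^ (4 : ℕ) = (N : ℝ) := by
    rw [ht_def, ← Real.rpow_natCast ((N:ℝ) ^ ((1:ℝ)/4)) 4, ← Real.rpow_mul (le_of_lt hNpos)]
    norm_num
  have hN6 : (6 : ℝ) ≤ (N : ℝ) := by exact_mod_cast hN
  have ht : (3 : ℝ) / 2 < t := by
    by_contra h
    push_neg at h
    have h2 : t ^ 2 ≤ 9 / 4 := by nlinarith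
    have h4 : t ^ 4 ≤ 81 / 16 := by nlinarith [sq_nonneg t]
    linarith
  -- integer inequalities
  have hs2 : 4 * N ≤ (x + y) ^ 2 := by nlinarith [sq_nonneg (x - y)]
  have hkey : 2 * (x + y) + 1 ≤ |x' - y'| ^ 2 := by
    rw [sq_abs]
    nlinarith [hlt, hs2, hxy, hxy', mul_nonneg (by linarith : (0:ℤ) ≤ x' + y' - (x + y) - 1) (by linarith : (0:ℤ) ≤ x' + y' + x + y + 1)]
  have hM0 : (0 : ℤ) ≤ M := le_trans (abs_nonneg _) hMd
  -- move to reals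
  have hsR : 2 * t ^ 2 ≤ ((x + y : ℤ) : ℝ) := by
    have h1 : (4 : ℝ) * t ^ 4 ≤ ((x + y : ℤ) : ℝ) ^ 2 := by
      rw [ht4]; exact_mod_cast hs2
    have h2 : (0 : ℝ) < ((x + y : ℤ) : ℝ) := by exact_mod_cast add_pos hx hy
    nlinarith [sq_nonneg t, sq_nonneg (((x + y : ℤ) : ℝ) - 2 * t ^ 2)]
  have hM2 : 4 * t ^ 2 + 1 ≤ ((M : ℝ)) ^ 2 := by
    have hd : ((|x' - y'| : ℤ) : ℝ) ≤ (M : ℝ) := by exact_mod_cast hMd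
    have hdnn : (0 : ℝ) ≤ ((|x' - y'| : ℤ) : ℝ) := by exact_mod_cast abs_nonneg (x' - y')
    have hkR : 2 * ((x + y : ℤ) : ℝ) + 1 ≤ ((|x' - y'| : ℤ) : ℝ) ^ 2 := by exact_mod_cast hkey
    nlinarith [hsR, hkR, hd, hdnn]
  have hMR0 : (0 : ℝ) ≤ (M : ℝ) := by exact_mod_cast hM0
  -- final bound
  have h1u : 1 / (2 * t - 1) ≤ 1 / 2 := by
    apply one_div_le_one_div_of_le <;> linarith
  have hMgt : 2 * t - 1 / 2 < (M : ℝ) := by nlinarith [hM2, ht, hMR0]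
  have hfin : 2 * t + 1 / (2 * t - 1) < ((M + 1 : ℤ) : ℝ) := by push_cast; linarith
  have := Int.floor_lt.mpr hfin
  omega

theorem stmt_5 (N x1 y1 x2 y2 x3 y3 : ℤ) (hN : 6 ≤ N)
    (hx1 : 0 < x1) (hx2 : 0 < x2) (hx3 : 0 < x3)
    (hy1 : 0 < y1) (hy2 : 0 < y2) (hy3 : 0 < y3)
    (h12 : x1 ≠ x2) (h13 : x1 ≠ x3) (h23 : x2 ≠ x3)
    (h1 : x1 * y1 = N) (h2 : x2 * y2 = N) (h3 : x3 * y3 = N) :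
    ⌊2 * (N : ℝ) ^ ((1 : ℝ) / 4) + 1 / (2 * (N : ℝ) ^ ((1 : ℝ) / 4) - 1)⌋ ≤
      max |x1 - y1| (max |x2 - y2| |x3 - y3|) := by
  set M := max |x1 - y1| (max |x2 - y2| |x3 - y3|) with hM
  have hd1 : |x1 - y1| ≤ M := le_max_left _ _
  have hd2 : |x2 - y2| ≤ M := le_trans (le_max_left _ _) (le_max_right _ _)
  have hd3 : |x3 - y3| ≤ M := le_trans (le_max_right _ _) (le_max_right _ _)
  by_cases hs12 : x1 + y1 = x2 + y2
  · -- then x1 = y2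
    have he12 : (x1 - x2) * (x1 - y2) = 0 := by nlinarith [h1, h2, hs12]
    have hx1y2 : x1 = y2 := by
      rcases mul_eq_zero.mp he12 with h | h
      · exact absurd (by omega : x1 = x2) h12
      · omega
    by_cases hs13 : x1 + y1 = x3 + y3
    · -- then also x1 = y3, contradiction
      have he13 : (x1 - x3) * (x1 - y3) = 0 := by nlinarith [h1, h3, hs13]
      have hx1y3 : x1 = y3 := by
        rcases mul_eq_zero.mp he13 with h | h
        · exact absurd (by omega : x1 = x3) h13
        · omega
      have hy23 : y2 = y3 := by omega
      have : x2 = x3 := by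
        have := h2.trans h3.symm
        rw [hy23] at this
        exact mul_right_cancel₀ (ne_of_gt hy3) this
      exact absurd this h23
    · rcases lt_or_gt_of_ne hs13 with h | h
      · exact stmt_5_aux N x1 y1 x3 y3 M hN hx1 hy1 hx3 hy3 h1 h3 h hd3
      · exact stmt_5_aux N x3 y3 x1 y1 M hN hx3 hy3 hx1 hy1 h3 h1 h hd1
  · rcases lt_or_gt_of_ne hs12 with h | h
    · exact stmt_5_aux N x1 y1 x2 y2 M hN hx1 hy1 hx2 hy2 h1 h2 h hd2
    · exact stmt_5_aux N x2 y2 x1 y1 M hN hx2 hy2 hx1 hy1 h2 h1 h hd1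
end

section
/- For every integer K ≥ 1, let N = K·(K + 1)²·(K + 2). Then the three distinct pairs (x1, y1) = (K(K+1), (K+1)(K+2)), (x2, y2) = (K(K+2), (K+1)²), (x3, y3) = ((K+1)², K(K+2)) are lattice points on x·y = N, and the maximum over i of |x_i − y_i| equals 2(K + 1), which satisfies 2·N^{1/4} < 2(K + 1) < 2·N^{1/4} + 1/(2·N^{1/4} − 1). -/
lemma stmt_6_aux (m r : ℝ) (hm2 : 2 ≤ m) (hr0 : 0 ≤ r)
    (hr4 : r ^ 4 = m ^ 4 - m ^ 2) :
    2 * r < 2 * m ∧ 2 * m < 2 * r + 1 / (2 * r - 1) := by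
  have hmpos : (0 : ℝ) < m := by linarith
  have hrm : r < m := by
    apply lt_of_pow_lt_pow_left₀ 4 (by linarith)
    rw [hr4]; nlinarith
  obtain ⟨u, hu⟩ : ∃ u : ℝ, u = 1 / (2 * m) := ⟨_, rfl⟩
  have hu1 : 2 * m * u = 1 := by rw [hu]; field_simp
  have hupos : 0 < u := by rw [hu]; positivity
  have hu4 : u ≤ 1 / 4 := by
    rw [hu, div_le_div_iff₀ (by linarith) (by norm_num)]; linarith
  have hlow : m - u < r := by
    apply lt_of_pow_lt_pow_left₀ 4 hr0
    rw [hr4]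
    have e4 : 4 * m ^ 3 * u = 2 * m ^ 2 := by linear_combination (2 * m ^ 2) * hu1
    have e5 : 6 * m ^ 2 * u ^ 2 = 3 / 2 := by
      linear_combination (3 / 2) * (2 * m * u + 1) * hu1
    have e6 : 4 * m * u ^ 3 = 2 * u ^ 2 := by linear_combination (2 * u ^ 2) * hu1
    have hu2 : u ^ 2 ≤ 1 := by nlinarith
    have hu42 : u ^ 4 ≤ u ^ 2 := by nlinarith [sq_nonneg u]
    nlinarith [e4, e5, e6, hm2, hu42, sq_nonneg u]
  have hlow2 : 2 * m ^ 2 - 1 < 2 * m * r := by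
    have h := mul_lt_mul_of_pos_left hlow (show (0 : ℝ) < 2 * m by linarith)
    nlinarith [hu1]
  have hr1 : (1 : ℝ) < 2 * r - 1 := by nlinarith
  refine ⟨by linarith, ?_⟩
  have hPpos : (0 : ℝ) < (m + r) * (m ^ 2 + r ^ 2) := by positivity
  have hid : (m - r) * ((m + r) * (m ^ 2 + r ^ 2)) = m ^ 2 := by
    linear_combination -hr4
  have hkey : 2 * m ^ 2 * (2 * r - 1) < (m + r) * (m ^ 2 + r ^ 2) := by
    nlinarith [mul_lt_mul_of_pos_left hlow2 hmpos,
      mul_nonneg (sq_nonneg (m - r)) hr0,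
      mul_nonneg hmpos.le (sq_nonneg (m - r)), hm2]
  have h5 : 2 * (m - r) * (2 * r - 1) * ((m + r) * (m ^ 2 + r ^ 2)) <
      1 * ((m + r) * (m ^ 2 + r ^ 2)) := by
    calc 2 * (m - r) * (2 * r - 1) * ((m + r) * (m ^ 2 + r ^ 2))
        = 2 * m ^ 2 * (2 * r - 1) := by linear_combination (2 * (2 * r - 1)) * hid
      _ < (m + r) * (m ^ 2 + r ^ 2) := hkey
      _ = 1 * ((m + r) * (m ^ 2 + r ^ 2)) := by ring
  have hmr : 2 * (m - r) * (2 * r - 1) < 1 := lt_of_mul_lt_mul_right h5 hPpos.le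
  have h2r1 : (0 : ℝ) < 2 * r - 1 := by linarith
  have hfin : 2 * (m - r) < 1 / (2 * r - 1) := by
    rw [lt_div_iff₀ h2r1]; linarith
  linarith

theorem stmt_6 (K N : ℤ) (hK : 1 ≤ K) (hN : N = K * (K + 1) ^ 2 * (K + 2)) :
    (K * (K + 1)) * ((K + 1) * (K + 2)) = N ∧
    (K * (K + 2)) * ((K + 1) ^ 2) = N ∧
    ((K + 1) ^ 2) * (K * (K + 2)) = N ∧
    (K * (K + 1), (K + 1) * (K + 2)) ≠ (K * (K + 2), (K + 1) ^ 2) ∧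
    (K * (K + 1), (K + 1) * (K + 2)) ≠ ((K + 1) ^ 2, K * (K + 2)) ∧
    (K * (K + 2), (K + 1) ^ 2) ≠ ((K + 1) ^ 2, K * (K + 2)) ∧
    max |K * (K + 1) - (K + 1) * (K + 2)|
      (max |K * (K + 2) - (K + 1) ^ 2| |(K + 1) ^ 2 - K * (K + 2)|) = 2 * (K + 1) ∧
    2 * (N : ℝ) ^ ((1 : ℝ) / 4) < (2 * (K + 1) : ℤ) ∧
    ((2 * (K + 1) : ℤ) : ℝ) <
      2 * (N : ℝ) ^ ((1 : ℝ) / 4) + 1 / (2 * (N : ℝ) ^ ((1 : ℝ) / 4) - 1) := by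
  have hK' : (1 : ℝ) ≤ (K : ℝ) := by exact_mod_cast hK
  have hm2 : (2 : ℝ) ≤ (K : ℝ) + 1 := by linarith
  have hNm : (N : ℝ) = ((K : ℝ) + 1) ^ 4 - ((K : ℝ) + 1) ^ 2 := by
    rw [hN]; push_cast; ring
  have hN0 : (0 : ℝ) ≤ (N : ℝ) := by
    have h1 : (1 : ℝ) ≤ ((K : ℝ) + 1) ^ 2 := by nlinarith
    have h2 : (0 : ℝ) ≤ ((K : ℝ) + 1) ^ 2 * (((K : ℝ) + 1) ^ 2 - 1) :=
      mul_nonneg (sq_nonneg _) (by linarith)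
    nlinarith [hNm]
  have hr0 : 0 ≤ (N : ℝ) ^ ((1 : ℝ) / 4) := Real.rpow_nonneg hN0 _
  have hr4 : ((N : ℝ) ^ ((1 : ℝ) / 4)) ^ 4 = ((K : ℝ) + 1) ^ 4 - ((K : ℝ) + 1) ^ 2 := by
    rw [← Real.rpow_natCast ((N : ℝ) ^ ((1 : ℝ) / 4)) 4, ← Real.rpow_mul hN0]
    norm_num [hNm]
  obtain ⟨haux1, haux2⟩ := stmt_6_aux ((K : ℝ) + 1) ((N : ℝ) ^ ((1 : ℝ) / 4)) hm2 hr0 hr4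
  refine ⟨by rw [hN]; ring, by rw [hN]; ring, by rw [hN]; ring, ?_, ?_, ?_, ?_, ?_, ?_⟩
  · intro h
    have h1 := (Prod.mk.injEq _ _ _ _).mp h
    nlinarith [h1.1]
  · intro h
    have h1 := (Prod.mk.injEq _ _ _ _).mp h
    nlinarith [h1.1]
  · intro h
    have h1 := (Prod.mk.injEq _ _ _ _).mp h
    nlinarith [h1.1]
  · have e1 : K * (K + 1) - (K + 1) * (K + 2) = -(2 * (K + 1)) := by ring
    have e2 : K * (K + 2) - (K + 1) ^ 2 = -1 := by ring
    have e3 : (K + 1) ^ 2 - K * (K + 2) = 1 := by ring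
    rw [e1, e2, e3, abs_neg, abs_neg, abs_one,
      abs_of_nonneg (by linarith : (0 : ℤ) ≤ 2 * (K + 1)), max_self]
    exact max_eq_left (by linarith)
  · push_cast
    linarith
  · push_cast
    linarith
end

section
/- Let N ≥ 2^20 be a positive integer and suppose x1 < x2 < x3 are positive integers, each dividing N with x_i² > N (so each lattice point (x_i, y_i) with y_i = N/x_i lies strictly to the right of the center (√N, √N) of the hyperbola x·y = N). Then max over i of |x_i − y_i| is at least ⌊2·√2·N^{1/4} + 1/2⌋, where ⌊t⌋ denotes the greatest integer not exceeding t. -/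
/-!
Write `y = N / x` and `s = x + y`, `d = x - y`, so that `s ^ 2 = d ^ 2 + 4 * N`. To the right of the
center, `x ↦ x + N / x` is strictly increasing on divisors, so three such points force
`s₃ ≥ s₁ + 2`. Hence `d₃ ^ 2 = s₃ ^ 2 - 4 * N ≥ d₁ ^ 2 + 4 * s₁ + 4 > 8 * √N`, because `d₁ ≠ 0` and
`s₁ > 2 * √N`. So `d₃ > 2 * √2 * N ^ (1 / 4)`, and an integer exceeding `t` is at least `⌊t + 1 / 2⌋`.
-/

open Real

lemma add_ediv_sq_eq_sub_ediv_sq_add {N x : ℤ} (hx : x ∣ N) :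
    (x + N / x) ^ 2 = (x - N / x) ^ 2 + 4 * N := by
  linear_combination 4 * Int.mul_ediv_cancel' hx

lemma add_ediv_lt_add_ediv {N a b : ℤ} (ha : 0 < a) (hab : a < b) (hda : a ∣ N) (hdb : b ∣ N)
    (hN : N < a * b) : a + N / a < b + N / b := by
  have key : a * b * (b + N / b - (a + N / a)) = (b - a) * (a * b - N) := by
    linear_combination a * Int.mul_ediv_cancel' hdb - b * Int.mul_ediv_cancel' hda
  have hpos : 0 < a * b * (b + N / b - (a + N / a)) := key ▸ mul_pos (by omega) (by omega)
  linarith [pos_of_mul_pos_right hpos (mul_pos ha (ha.trans hab)).le]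

lemma two_mul_sqrt_lt_add_ediv {N x : ℤ} (hN : 0 ≤ N) (hx : 0 < x) (hdx : x ∣ N)
    (hxN : N < x ^ 2) : 2 * √(N : ℝ) < ((x + N / x : ℤ) : ℝ) := by
  have hy : N / x < x := by nlinarith [Int.mul_ediv_cancel' hdx]
  have hs : 4 * N < (x + N / x) ^ 2 := by
    nlinarith [add_ediv_sq_eq_sub_ediv_sq_add hdx]
  have hsR : (2 * √(N : ℝ)) ^ 2 < ((x + N / x : ℤ) : ℝ) ^ 2 := by
    rw [mul_pow, sq_sqrt (by exact_mod_cast hN)]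
    exact_mod_cast hs
  exact lt_of_pow_lt_pow_left₀ 2 (by exact_mod_cast (add_pos_of_pos_of_nonneg hx
    (Int.ediv_nonneg hN hx.le)).le) hsR

lemma eight_mul_sqrt_lt_sub_ediv_sq {N x z : ℤ} (hN : 0 ≤ N) (hx : 0 < x) (hdx : x ∣ N)
    (hdz : z ∣ N) (hxN : N < x ^ 2) (hgap : x + N / x + 2 ≤ z + N / z) :
    8 * √(N : ℝ) < ((z - N / z : ℤ) : ℝ) ^ 2 := by
  have hy : N / x < x := by nlinarith [Int.mul_ediv_cancel' hdx]
  have hs : 0 ≤ x + N / x := add_nonneg hx.le (Int.ediv_nonneg hN hx.le)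
  have hsq : 4 * (x + N / x) + 5 ≤ (z - N / z) ^ 2 := by
    nlinarith [add_ediv_sq_eq_sub_ediv_sq_add hdx, add_ediv_sq_eq_sub_ediv_sq_add hdz,
      pow_le_pow_left₀ (by omega) hgap 2]
  have hsqR : 4 * ((x + N / x : ℤ) : ℝ) + 5 ≤ ((z - N / z : ℤ) : ℝ) ^ 2 := by
    exact_mod_cast hsq
  linarith [two_mul_sqrt_lt_add_ediv hN hx hdx hxN]

lemma two_mul_sqrt_two_mul_rpow_quarter_sq {N : ℝ} (hN : 0 ≤ N) :
    (2 * √2 * N ^ ((1 : ℝ) / 4)) ^ 2 = 8 * √N := by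
  have h : (N ^ ((1 : ℝ) / 4)) ^ 2 = √N := by
    rw [← rpow_natCast, ← rpow_mul hN, sqrt_eq_rpow]
    norm_num
  rw [mul_pow, mul_pow, sq_sqrt zero_le_two, h]
  ring

lemma floor_two_mul_sqrt_two_mul_rpow_quarter_add_half_le {N : ℝ} {n : ℤ} (hN : 0 ≤ N)
    (h : 8 * √N < (n : ℝ) ^ 2) : ⌊2 * √2 * N ^ ((1 : ℝ) / 4) + 1 / 2⌋ ≤ |n| := by
  set t := 2 * √2 * N ^ ((1 : ℝ) / 4)
  have ht : |t| < |(n : ℝ)| := sq_lt_sq.mp (two_mul_sqrt_two_mul_rpow_quarter_sq hN ▸ h)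
  rw [abs_of_nonneg (by positivity)] at ht
  rw [Int.floor_le_iff, Int.cast_abs]
  linarith

theorem stmt_7_general (N x1 x2 x3 : ℤ) (hN : 2 ^ 20 ≤ N)
    (hx1 : 0 < x1) (h12 : x1 < x2) (h23 : x2 < x3)
    (hd1 : x1 ∣ N) (hd2 : x2 ∣ N) (hd3 : x3 ∣ N)
    (hr1 : N < x1 ^ 2) :
    ⌊2 * Real.sqrt 2 * (N : ℝ) ^ ((1 : ℝ) / 4) + 1 / 2⌋ ≤
      max |x1 - N / x1| (max |x2 - N / x2| |x3 - N / x3|) := by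
  have hN0 : 0 ≤ N := by linarith
  have hs12 := add_ediv_lt_add_ediv hx1 h12 hd1 hd2 (by nlinarith)
  have hs23 := add_ediv_lt_add_ediv (hx1.trans h12) h23 hd2 hd3 (by nlinarith)
  have hd3sq := eight_mul_sqrt_lt_sub_ediv_sq hN0 hx1 hd1 hd3 hr1 (by omega)
  calc ⌊2 * √2 * (N : ℝ) ^ ((1 : ℝ) / 4) + 1 / 2⌋
      ≤ |x3 - N / x3| :=
        floor_two_mul_sqrt_two_mul_rpow_quarter_add_half_le (by exact_mod_cast hN0) hd3sq
    _ ≤ max |x1 - N / x1| (max |x2 - N / x2| |x3 - N / x3|) :=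
        le_max_of_le_right (le_max_right _ _)

theorem stmt_7 (N x1 x2 x3 : ℤ) (hN : 2 ^ 20 ≤ N)
    (hx1 : 0 < x1) (h12 : x1 < x2) (h23 : x2 < x3)
    (hd1 : x1 ∣ N) (hd2 : x2 ∣ N) (hd3 : x3 ∣ N)
    (hr1 : N < x1 ^ 2) (hr2 : N < x2 ^ 2) (hr3 : N < x3 ^ 2) :
    ⌊2 * Real.sqrt 2 * (N : ℝ) ^ ((1 : ℝ) / 4) + 1 / 2⌋ ≤
      max |x1 - N / x1| (max |x2 - N / x2| |x3 - N / x3|) :=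
  stmt_7_general N x1 x2 x3 hN hx1 h12 h23 hd1 hd2 hd3 hr1
end

section
/- Let N ≥ 1024 be a positive integer and suppose x1 < x2 < x3 are positive integers, each dividing N with x_i² > N. Then max over i of (x_i − N/x_i) > 2·√2·N^{1/4} − 2. -/
theorem stmt_8 (N x1 x2 x3 : ℤ) (hN : 1024 ≤ N)
    (hx1 : 0 < x1) (h12 : x1 < x2) (h23 : x2 < x3)
    (hd1 : x1 ∣ N) (hd2 : x2 ∣ N) (hd3 : x3 ∣ N)
    (hr1 : N < x1 ^ 2) (hr2 : N < x2 ^ 2) (hr3 : N < x3 ^ 2) :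
    2 * Real.sqrt 2 * (N : ℝ) ^ ((1 : ℝ) / 4) - 2 <
      max ((x1 : ℝ) - (N : ℝ) / (x1 : ℝ))
        (max ((x2 : ℝ) - (N : ℝ) / (x2 : ℝ)) ((x3 : ℝ) - (N : ℝ) / (x3 : ℝ))) := by
  have hN0 : (0:ℤ) < N := by linarith
  have hx2 : 0 < x2 := lt_trans hx1 h12
  have hx3 : 0 < x3 := lt_trans hx2 h23
  obtain ⟨d1, hd1'⟩ := hd1
  obtain ⟨d2, hd2'⟩ := hd2
  obtain ⟨d3, hd3'⟩ := hd3
  have hdp1 : 0 < d1 := by nlinarith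
  have hdp2 : 0 < d2 := by nlinarith
  have hdp3 : 0 < d3 := by nlinarith
  have hlt1 : d1 < x1 := by nlinarith
  have hlt3 : d3 < x3 := by nlinarith
  -- sums are strictly increasing
  have hs12 : x1 + d1 < x2 + d2 := by
    have h : (x2 + d2 - (x1 + d1)) * (x1 * x2) = (x2 - x1) * (x1 * x2 - N) := by
      linear_combination x2 * hd1' - x1 * hd2'
    have hP : 0 < x1 * x2 - N := by nlinarith
    have h' : 0 < (x2 + d2 - (x1 + d1)) * (x1 * x2) := h ▸ mul_pos (sub_pos.mpr h12) hP
    rcases mul_pos_iff.mp h' with ⟨h1, _⟩ | ⟨_, h2⟩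
    · linarith
    · exact absurd h2 (not_lt.mpr (mul_pos hx1 hx2).le)
  have hs23 : x2 + d2 < x3 + d3 := by
    have h : (x3 + d3 - (x2 + d2)) * (x2 * x3) = (x3 - x2) * (x2 * x3 - N) := by
      linear_combination x3 * hd2' - x2 * hd3'
    have hP : 0 < x2 * x3 - N := by nlinarith
    have h' : 0 < (x3 + d3 - (x2 + d2)) * (x2 * x3) := h ▸ mul_pos (sub_pos.mpr h23) hP
    rcases mul_pos_iff.mp h' with ⟨h1, _⟩ | ⟨_, h2⟩
    · linarith
    · exact absurd h2 (not_lt.mpr (mul_pos hx2 hx3).le)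
  have hs3 : x1 + d1 + 2 ≤ x3 + d3 := by omega
  have hk1 : 1 ≤ x1 - d1 := by omega
  have hsq : (x1 + d1 + 2)^2 ≤ (x3 + d3)^2 := pow_le_pow_left₀ (by omega) hs3 2
  have hKsq : 4*(x1 + d1) + 5 ≤ (x3 - d3)^2 := by
    nlinarith [hsq, hk1, sq_nonneg (x1 - d1), mul_le_mul hk1 hk1 (by norm_num) (by omega)]
  have hs1sq : 4*N + 1 ≤ (x1 + d1)^2 := by
    nlinarith [mul_le_mul hk1 hk1 (by norm_num) (by omega)]
  -- move to the reals
  have hA : (4:ℝ)*((x1:ℝ)+(d1:ℝ)) + 5 ≤ ((x3:ℝ)-(d3:ℝ))^2 := by exact_mod_cast hKsq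
  have hB : (4:ℝ)*(N:ℝ) + 1 ≤ ((x1:ℝ)+(d1:ℝ))^2 := by exact_mod_cast hs1sq
  have hNR : (0:ℝ) ≤ (N:ℝ) := by exact_mod_cast hN0.le
  have hS0 : (0:ℝ) ≤ (x1:ℝ)+(d1:ℝ) := by
    have : (0:ℤ) ≤ x1 + d1 := by omega
    exact_mod_cast this
  have hK0 : (0:ℝ) ≤ (x3:ℝ)-(d3:ℝ) := by
    have : (0:ℤ) ≤ x3 - d3 := by omega
    exact_mod_cast this
  have hsqrtN : 2 * Real.sqrt (N:ℝ) < (x1:ℝ)+(d1:ℝ) := by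
    have h1 : (2 * Real.sqrt (N:ℝ))^2 < ((x1:ℝ)+(d1:ℝ))^2 := by
      have h : (Real.sqrt (N:ℝ))^2 = (N:ℝ) := Real.sq_sqrt hNR
      rw [mul_pow, h]
      norm_num
      linarith
    exact lt_of_pow_lt_pow_left₀ 2 hS0 h1
  have h14 : (((N:ℝ) ^ ((1:ℝ)/4)))^2 = Real.sqrt (N:ℝ) := by
    rw [Real.sqrt_eq_rpow, ← Real.rpow_natCast ((N:ℝ)^((1:ℝ)/4)) 2, ← Real.rpow_mul hNR]
    norm_num
  have hT0 : (0:ℝ) ≤ 2 * Real.sqrt 2 * (N:ℝ) ^ ((1:ℝ)/4) := by positivity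
  have hT2 : (2 * Real.sqrt 2 * (N:ℝ) ^ ((1:ℝ)/4))^2 = 8 * Real.sqrt (N:ℝ) := by
    have h2 : (Real.sqrt 2)^2 = 2 := Real.sq_sqrt (by norm_num)
    rw [mul_pow, mul_pow, h2, h14]; ring
  have hTK : 2 * Real.sqrt 2 * (N:ℝ) ^ ((1:ℝ)/4) < (x3:ℝ)-(d3:ℝ) := by
    have h1 : (2 * Real.sqrt 2 * (N:ℝ) ^ ((1:ℝ)/4))^2 < ((x3:ℝ)-(d3:ℝ))^2 := by
      rw [hT2]; linarith
    exact lt_of_pow_lt_pow_left₀ 2 hK0 h1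
  have hdiv : (N:ℝ)/(x3:ℝ) = (d3:ℝ) := by
    have hx3R : ((x3:ℝ)) ≠ 0 := by exact_mod_cast hx3.ne'
    rw [div_eq_iff hx3R]
    exact_mod_cast hd3'.trans (mul_comm x3 d3)
  calc 2 * Real.sqrt 2 * (N:ℝ) ^ ((1:ℝ)/4) - 2
      < (x3:ℝ) - (N:ℝ)/(x3:ℝ) := by rw [hdiv]; linarith
    _ ≤ max ((x1 : ℝ) - (N : ℝ) / (x1 : ℝ))
        (max ((x2 : ℝ) - (N : ℝ) / (x2 : ℝ)) ((x3 : ℝ) - (N : ℝ) / (x3 : ℝ))) :=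
      (le_max_right _ _).trans (le_max_right _ _)
end

section
/- Let N, A, B, a1, a2, b1, b2 be positive integers with a1 < a2 and b1 < b2 such that N = A·B = (A + a1)·(B − b1) = (A + a2)·(B − b2). Set D = a2·b1 − a1·b2. Then D > 0, A·D = a1·a2·(b2 − b1), and B·D = b1·b2·(a2 − a1). -/
theorem stmt_11 (N A B a1 a2 b1 b2 : ℤ)
    (hN : 0 < N) (hA : 0 < A) (hB : 0 < B)
    (ha1 : 0 < a1) (hb1 : 0 < b1) (ha : a1 < a2) (hb : b1 < b2)
    (h1 : N = A * B) (h2 : N = (A + a1) * (B - b1)) (h3 : N = (A + a2) * (B - b2)) :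
    0 < a2 * b1 - a1 * b2 ∧
    A * (a2 * b1 - a1 * b2) = a1 * a2 * (b2 - b1) ∧
    B * (a2 * b1 - a1 * b2) = b1 * b2 * (a2 - a1) := by
  have e1 : A * b1 = a1 * (B - b1) := by linear_combination h2 - h1
  have e2 : A * b2 = a2 * (B - b2) := by linear_combination h3 - h1
  have hAD : A * (a2 * b1 - a1 * b2) = a1 * a2 * (b2 - b1) := by
    linear_combination a2 * e1 - a1 * e2
  have hBD : B * (a2 * b1 - a1 * b2) = b1 * b2 * (a2 - a1) := by
    linear_combination b2 * e1 - b1 * e2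
  refine ⟨?_, hAD, hBD⟩
  nlinarith [mul_pos (mul_pos ha1 (ha1.trans ha)) (sub_pos.mpr hb)]
end

section
/- Let N, A, B, a1, a2, b1, b2 be positive integers with a1 < a2 and b1 < b2 such that N = A·B = (A + a1)·(B − b1) = (A + a2)·(B − b2). If max(a2, b2) ≥ 5, then max(a2, b2)³ > 4·max(A, B); consequently max(a2, b2) > (4·max(A, B))^{1/3} ≥ 2^{2/3}·N^{1/6}. -/
set_option maxHeartbeats 1000000 in
theorem stmt_12 (N A B a1 a2 b1 b2 : ℤ)
    (hN : 0 < N) (hA : 0 < A) (hB : 0 < B)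
    (ha1 : 0 < a1) (hb1 : 0 < b1) (ha : a1 < a2) (hb : b1 < b2)
    (h1 : N = A * B) (h2 : N = (A + a1) * (B - b1)) (h3 : N = (A + a2) * (B - b2))
    (hmax : 5 ≤ max a2 b2) :
    4 * max A B < (max a2 b2) ^ 3 ∧
    (4 * ((max A B : ℤ) : ℝ)) ^ ((1 : ℝ) / 3) < ((max a2 b2 : ℤ) : ℝ) ∧
    (2 : ℝ) ^ ((2 : ℝ) / 3) * (N : ℝ) ^ ((1 : ℝ) / 6) ≤
      (4 * ((max A B : ℤ) : ℝ)) ^ ((1 : ℝ) / 3) := by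
  set M : ℤ := max a2 b2 with hM
  set C : ℤ := max A B with hC
  have hMa2 : a2 ≤ M := le_max_left _ _
  have hMb2 : b2 ≤ M := le_max_right _ _
  -- key algebraic identities
  have hA1 : A * b1 = a1 * (B - b1) := by linear_combination h2 - h1
  have hA2 : A * b2 = a2 * (B - b2) := by linear_combination h3 - h1
  have hdA : (a2 * b1 - a1 * b2) * A = a1 * a2 * (b2 - b1) := by
    linear_combination a2 * hA1 - a1 * hA2
  have hdB : (a2 * b1 - a1 * b2) * B = b1 * b2 * (a2 - a1) := by
    linear_combination b2 * hA1 - b1 * hA2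
  have hd : 1 ≤ a2 * b1 - a1 * b2 := by
    nlinarith [mul_pos (mul_pos ha1 (ha1.trans ha)) (sub_pos.mpr hb)]
  have hB2 : b2 < B := by
    have : 0 < B - b2 := by
      have hpos : 0 < A + a2 := by linarith
      nlinarith
    linarith
  have hkey : a1 + (b2 - b1) ≤ M - 1 := by
    -- b1*(a2-a1) = d + a1*(b2-b1) > a1*(b2-b1), and b1*(a2-a1) ≤ (M-(b2-b1))*(M-a1)
    nlinarith [mul_pos hb1 (sub_pos.mpr ha), mul_pos ha1 (sub_pos.mpr hb),
      mul_le_mul (by linarith : b1 ≤ M - (b2 - b1)) (by linarith : a2 - a1 ≤ M - a1)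
        (by linarith) (by linarith)]
  have hM5 : 5 ≤ M := hmax
  have hM0 : (0:ℤ) ≤ M := by linarith
  have t2 : 4 * (a1 * (b2 - b1)) ≤ (M - 1) ^ 2 := by
    nlinarith [sq_nonneg (a1 - (b2 - b1))]
  have t2M : M * (4 * (a1 * (b2 - b1))) ≤ M * (M - 1) ^ 2 :=
    mul_le_mul_of_nonneg_left t2 hM0
  have t3 : 0 ≤ ((a2 * b1 - a1 * b2) - 1) * (M ^ 3 - 4 * M) := by
    apply mul_nonneg (by linarith)
    nlinarith
  have t4 : 0 < M * (2 * M - 5) := by nlinarith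
  have c1 : 4 * A < M ^ 3 := by
    have hav : 0 < a1 * (b2 - b1) := mul_pos ha1 (sub_pos.mpr hb)
    have ha2M : a1 * (b2 - b1) * a2 ≤ a1 * (b2 - b1) * M :=
      mul_le_mul_of_nonneg_left hMa2 hav.le
    have hstep : (a2 * b1 - a1 * b2) * (4 * A) < (a2 * b1 - a1 * b2) * M ^ 3 := by
      nlinarith [hdA, ha2M, t2M, t3, t4]
    exact lt_of_mul_lt_mul_left hstep (by linarith)
  have c2 : 4 * B < M ^ 3 := by
    have hbu : 0 < b1 * (a2 - a1) := mul_pos hb1 (sub_pos.mpr ha)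
    have hb2M : b1 * (a2 - a1) * b2 ≤ b1 * (a2 - a1) * M :=
      mul_le_mul_of_nonneg_left hMb2 hbu.le
    have hstep : (a2 * b1 - a1 * b2) * (4 * B) < (a2 * b1 - a1 * b2) * M ^ 3 := by
      nlinarith [hdB, hb2M, t2M, t3, t4]
    exact lt_of_mul_lt_mul_left hstep (by linarith)
  have cmain : 4 * C < M ^ 3 := by
    rcases max_cases A B with ⟨h, _⟩ | ⟨h, _⟩ <;> rw [hC, h] <;> [exact c1; exact c2]
  refine ⟨cmain, ?_, ?_⟩
  · -- (4*C)^(1/3) < M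
    have hC1 : (1:ℤ) ≤ C := le_max_of_le_left hA
    have h0 : (0:ℝ) ≤ 4 * (C:ℝ) := by positivity
    have hMpos : (0:ℝ) ≤ (M:ℝ) := by exact_mod_cast (by linarith : (0:ℤ) ≤ M)
    have hlt : 4 * (C:ℝ) < (M:ℝ) ^ (3:ℕ) := by exact_mod_cast cmain
    have := Real.rpow_lt_rpow h0 hlt (by norm_num : (0:ℝ) < 1/3)
    calc (4 * (C:ℝ)) ^ ((1:ℝ)/3) < ((M:ℝ) ^ (3:ℕ)) ^ ((1:ℝ)/3) := this
      _ = (M:ℝ) := by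
          rw [← Real.rpow_natCast (M:ℝ) 3, ← Real.rpow_mul hMpos]
          norm_num
  · -- 2^(2/3) * N^(1/6) ≤ (4*C)^(1/3)
    have hC1 : (1:ℤ) ≤ C := le_max_of_le_left hA
    have hCR : (1:ℝ) ≤ (C:ℝ) := by exact_mod_cast hC1
    have hNC : (N:ℝ) ≤ (C:ℝ) ^ (2:ℕ) := by
      have : N ≤ C ^ 2 := by
        have h4 : A ≤ C := le_max_left _ _
        have h5 : B ≤ C := le_max_right _ _
        calc N = A * B := h1
          _ ≤ C * C := mul_le_mul h4 h5 hB.le (by linarith)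
          _ = C ^ 2 := by ring
      exact_mod_cast this
    have h24 : (2:ℝ) ^ ((2:ℝ)/3) = (4:ℝ) ^ ((1:ℝ)/3) := by
      rw [show ((2:ℝ)/3 : ℝ) = (2:ℝ) * (1/3) by norm_num,
        Real.rpow_mul (by norm_num : (0:ℝ) ≤ 2)]
      norm_num
    have hsplit : (4 * (C:ℝ)) ^ ((1:ℝ)/3) = (4:ℝ) ^ ((1:ℝ)/3) * (C:ℝ) ^ ((1:ℝ)/3) :=
      Real.mul_rpow (by norm_num) (by linarith)
    rw [h24, hsplit]
    apply mul_le_mul_of_nonneg_left _ (by positivity)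
    calc (N:ℝ) ^ ((1:ℝ)/6) ≤ ((C:ℝ) ^ (2:ℕ)) ^ ((1:ℝ)/6) :=
          Real.rpow_le_rpow (by exact_mod_cast hN.le) hNC (by norm_num)
      _ = (C:ℝ) ^ ((1:ℝ)/3) := by
          rw [← Real.rpow_natCast (C:ℝ) 2, ← Real.rpow_mul (by linarith)]
          norm_num
end

section
/- Let N, A, B, a1, a2, b1, b2 be positive integers with a1 < a2 and b1 < b2 such that N = A·B = (A + a1)·(B − b1) = (A + a2)·(B − b2), and suppose A ≥ B. Then, with d2 = a2 − b2 (which is positive), one has (A + a2) − (B − b2) = d2·B/b2 + b2 ≥ 2·√(d2·B) = 2·√(d2)·(B/A)^{1/4}·N^{1/4}. -/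
theorem stmt_14 (N A B a1 a2 b1 b2 : ℤ)
    (hN : 0 < N) (hA : 0 < A) (hB : 0 < B)
    (ha1 : 0 < a1) (hb1 : 0 < b1) (ha : a1 < a2) (hb : b1 < b2)
    (h1 : N = A * B) (h2 : N = (A + a1) * (B - b1)) (h3 : N = (A + a2) * (B - b2))
    (hAB : B ≤ A) :
    0 < a2 - b2 ∧
    (((A + a2) - (B - b2) : ℤ) : ℝ) = ((a2 - b2 : ℤ) : ℝ) * (B : ℝ) / (b2 : ℝ) + (b2 : ℝ) ∧
    2 * Real.sqrt (((a2 - b2 : ℤ) : ℝ) * (B : ℝ)) ≤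
      ((a2 - b2 : ℤ) : ℝ) * (B : ℝ) / (b2 : ℝ) + (b2 : ℝ) ∧
    2 * Real.sqrt (((a2 - b2 : ℤ) : ℝ) * (B : ℝ)) =
      2 * Real.sqrt ((a2 - b2 : ℤ) : ℝ) * ((B : ℝ) / (A : ℝ)) ^ ((1 : ℝ) / 4) *
        (N : ℝ) ^ ((1 : ℝ) / 4) := by
  have ha2 : 0 < a2 := lt_trans ha1 ha
  have hkey : a2 * B = b2 * (A + a2) := by linear_combination h1 - h3
  have hb2 : 0 < b2 := by nlinarith
  have hd : 0 < a2 - b2 := by nlinarith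
  -- real versions
  have hb2R : (0:ℝ) < (b2:ℝ) := by exact_mod_cast hb2
  have hdR : (0:ℝ) < ((a2 - b2 : ℤ) : ℝ) := by exact_mod_cast hd
  have hBR : (0:ℝ) < (B:ℝ) := by exact_mod_cast hB
  have hAR : (0:ℝ) < (A:ℝ) := by exact_mod_cast hA
  have hNR : (0:ℝ) < (N:ℝ) := by exact_mod_cast hN
  have hkeyR : (a2:ℝ) * B = (b2:ℝ) * ((A:ℝ) + a2) := by exact_mod_cast hkey
  refine ⟨hd, ?_, ?_, ?_⟩
  · push_cast
    field_simp
    linear_combination (-1:ℝ) * hkeyR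
  · -- AM-GM
    set d : ℝ := ((a2 - b2 : ℤ) : ℝ) with hdef
    have h1' : Real.sqrt (d * B) = Real.sqrt (d * B / b2) * Real.sqrt b2 := by
      rw [← Real.sqrt_mul (by positivity)]
      congr 1
      field_simp
    have hx := Real.sq_sqrt (show (0:ℝ) ≤ d * B / b2 by positivity)
    have hy := Real.sq_sqrt (show (0:ℝ) ≤ (b2:ℝ) by positivity)
    nlinarith [sq_nonneg (Real.sqrt (d * B / b2) - Real.sqrt b2)]
  · have hNAB : (N:ℝ) = (A:ℝ) * B := by exact_mod_cast h1
    rw [Real.sqrt_mul hdR.le]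
    have hprod : (B:ℝ)/A * ((A:ℝ)*B) = (B:ℝ)^2 := by field_simp
    have : ((B : ℝ) / (A : ℝ)) ^ ((1 : ℝ) / 4) * (N : ℝ) ^ ((1 : ℝ) / 4) = Real.sqrt B := by
      rw [hNAB, ← Real.mul_rpow (by positivity) (by positivity), hprod,
        ← Real.rpow_natCast (B:ℝ) 2, ← Real.rpow_mul hBR.le, Real.sqrt_eq_rpow]
      norm_num
    rw [mul_assoc, this]
    ring
end

section
/- Let N be a positive integer and let x be a positive real number with x ≤ √N, and set y = N/x. If y − x ≤ 2·N^{1/4} − 1/2, then √N − x ≤ N^{1/4} − 1/4, i.e., x ≥ √N − N^{1/4} + 1/4. -/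
theorem stmt_15 (N : ℤ) (hN : 0 < N) (x : ℝ) (hx : 0 < x)
    (hxN : x ≤ Real.sqrt (N : ℝ))
    (h : (N : ℝ) / x - x ≤ 2 * (N : ℝ) ^ ((1 : ℝ) / 4) - 1 / 2) :
    Real.sqrt (N : ℝ) - x ≤ (N : ℝ) ^ ((1 : ℝ) / 4) - 1 / 4 := by
  have hN0 : (0 : ℝ) < (N : ℝ) := by exact_mod_cast hN
  have hs : Real.sqrt (N : ℝ) * Real.sqrt (N : ℝ) = (N : ℝ) :=
    Real.mul_self_sqrt hN0.le
  have hq : (N : ℝ) ^ ((1 : ℝ) / 4) * (N : ℝ) ^ ((1 : ℝ) / 4) = Real.sqrt (N : ℝ) := by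
    rw [← Real.rpow_add hN0, Real.sqrt_eq_rpow]; norm_num
  have hq1 : (1 : ℝ) ≤ (N : ℝ) ^ ((1 : ℝ) / 4) := by
    apply Real.one_le_rpow (by exact_mod_cast hN) (by norm_num)
  have h' : (N : ℝ) - x * x ≤ x * (2 * (N : ℝ) ^ ((1 : ℝ) / 4) - 1 / 2) := by
    have := (div_le_iff₀ hx).mp (by linarith [h] : (N : ℝ) / x ≤ 2 * (N : ℝ) ^ ((1 : ℝ) / 4) - 1 / 2 + x)
    nlinarith
  by_contra hc
  push_neg at hc
  nlinarith [sq_nonneg (Real.sqrt (N : ℝ) - x), hx.le, hxN]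
end

section
/- For every integer K ≥ 3, let N = (K − 1)·(K + 1)·2K·(2K − 1). Then the three pairs (x1, y1) = (2(K+1)(K−1), K(2K−1)), (x2, y2) = ((2K−1)(K+1), 2K(K−1)), (x3, y3) = (2K(K+1), (2K−1)(K−1)) are lattice points on x·y = N satisfying √N < x1 < x2 < x3, and the maximum over i of |x_i − y_i| equals 5K − 1. -/
/-!
Each pair is a factorisation of `N`, so each `x_i` lies right of the centre exactly when
`y_i < x_i`. The differences `x_i - y_i` are `K - 2`, `3K - 1` and `5K - 1`, all positive for
`K ≥ 3`, and the last one is the largest.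
-/

theorem Real.sqrt_mul_lt_left {x y : ℝ} (hy : 0 ≤ y) (hyx : y < x) : √(x * y) < x :=
  (Real.sqrt_lt' (hy.trans_lt hyx)).mpr (by nlinarith)

theorem stmt_18 (K N : ℤ) (hK : 3 ≤ K)
    (hN : N = (K - 1) * (K + 1) * (2 * K) * (2 * K - 1)) :
    (2 * (K + 1) * (K - 1)) * (K * (2 * K - 1)) = N ∧
    ((2 * K - 1) * (K + 1)) * (2 * K * (K - 1)) = N ∧
    (2 * K * (K + 1)) * ((2 * K - 1) * (K - 1)) = N ∧
    Real.sqrt (N : ℝ) < ((2 * (K + 1) * (K - 1) : ℤ) : ℝ) ∧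
    2 * (K + 1) * (K - 1) < (2 * K - 1) * (K + 1) ∧
    (2 * K - 1) * (K + 1) < 2 * K * (K + 1) ∧
    max |2 * (K + 1) * (K - 1) - K * (2 * K - 1)|
      (max |(2 * K - 1) * (K + 1) - 2 * K * (K - 1)|
        |2 * K * (K + 1) - (2 * K - 1) * (K - 1)|) = 5 * K - 1 := by
  have hN₁ : N = (2 * (K + 1) * (K - 1)) * (K * (2 * K - 1)) := by rw [hN]; ring
  have hd₁ : 2 * (K + 1) * (K - 1) - K * (2 * K - 1) = K - 2 := by ring
  have hd₂ : (2 * K - 1) * (K + 1) - 2 * K * (K - 1) = 3 * K - 1 := by ring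
  have hd₃ : 2 * K * (K + 1) - (2 * K - 1) * (K - 1) = 5 * K - 1 := by ring
  refine ⟨hN₁.symm, by rw [hN]; ring, by rw [hN]; ring, ?_, by nlinarith, by nlinarith, ?_⟩
  · rw [hN₁, Int.cast_mul]
    exact Real.sqrt_mul_lt_left (by exact_mod_cast (by nlinarith : 0 ≤ K * (2 * K - 1)))
      (by exact_mod_cast (by omega : K * (2 * K - 1) < 2 * (K + 1) * (K - 1)))
  · rw [hd₁, hd₂, hd₃, abs_of_nonneg (by omega), abs_of_nonneg (by omega),
      abs_of_nonneg (by omega)]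
    omega
end

section
/- Let b1 ≥ 1 and b2 ≥ 1 be integers satisfying the Pell-type equation (2·b1 + 3)² − 2·(b2 + 2)² = 1, and let N = b1·(b1 + 1)·(b1 + 2)·(b1 + 3). Then b2 is even, the three pairs (x1, y1) = ((b1+1)(b1+2), b1(b1+3)), (x2, y2) = ((b1+1)(b1+3), b1(b1+2)), (x3, y3) = ((b2+2)(b2+4)/2, b2(b2+2)/2) are lattice points on x·y = N with √N < x1 < x2 < x3, and x3 − y3 = 2(b2 + 2) satisfies 2·√2·N^{1/4} < 2(b2 + 2) < 2·√2·N^{1/4} + 2·√2/N^{1/4}; in particular, if N ≥ 2^20 then 2·√2·N^{1/4} < x3 − y3 < 2·√2·N^{1/4} + 0.1. -/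
set_option maxHeartbeats 1000000 in
theorem stmt_19 (b1 b2 N : ℤ) (hb1 : 1 ≤ b1) (hb2 : 1 ≤ b2)
    (hpell : (2 * b1 + 3) ^ 2 - 2 * (b2 + 2) ^ 2 = 1)
    (hN : N = b1 * (b1 + 1) * (b1 + 2) * (b1 + 3)) :
    Even b2 ∧
    ((b1 + 1) * (b1 + 2)) * (b1 * (b1 + 3)) = N ∧
    ((b1 + 1) * (b1 + 3)) * (b1 * (b1 + 2)) = N ∧
    ((b2 + 2) * (b2 + 4) / 2) * (b2 * (b2 + 2) / 2) = N ∧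
    Real.sqrt (N : ℝ) < (((b1 + 1) * (b1 + 2) : ℤ) : ℝ) ∧
    (b1 + 1) * (b1 + 2) < (b1 + 1) * (b1 + 3) ∧
    (b1 + 1) * (b1 + 3) < (b2 + 2) * (b2 + 4) / 2 ∧
    (b2 + 2) * (b2 + 4) / 2 - b2 * (b2 + 2) / 2 = 2 * (b2 + 2) ∧
    2 * Real.sqrt 2 * (N : ℝ) ^ ((1 : ℝ) / 4) < ((2 * (b2 + 2) : ℤ) : ℝ) ∧
    ((2 * (b2 + 2) : ℤ) : ℝ) <
      2 * Real.sqrt 2 * (N : ℝ) ^ ((1 : ℝ) / 4) +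
        2 * Real.sqrt 2 / (N : ℝ) ^ ((1 : ℝ) / 4) ∧
    (2 ^ 20 ≤ N →
      ((2 * (b2 + 2) : ℤ) : ℝ) < 2 * Real.sqrt 2 * (N : ℝ) ^ ((1 : ℝ) / 4) + 0.1) := by
  have heven : Even b2 := by
    rcases Int.even_or_odd b2 with h | ⟨k, hk⟩
    · exact h
    · exfalso
      have h5 : 4 * (b1 ^ 2 + 3 * b1 - 2 * k ^ 2 - 6 * k) = 10 := by
        subst hk; linear_combination hpell
      omega
  obtain ⟨j, hj⟩ := heven
  have hj1 : 1 ≤ j := by omega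
  have key4 : 4 * (b1 ^ 2 + 3 * b1) = 8 * (j + 1) ^ 2 - 8 := by
    subst hj; linear_combination hpell
  have key : b1 ^ 2 + 3 * b1 = 2 * (j + 1) ^ 2 - 2 := by linarith
  have hd1 : (b2 + 2) * (b2 + 4) / 2 = 2 * (j + 1) * (j + 2) := by
    have e : (b2 + 2) * (b2 + 4) = 2 * (2 * (j + 1) * (j + 2)) := by subst hj; ring
    rw [e, Int.mul_ediv_cancel_left _ two_ne_zero]
  have hd2 : b2 * (b2 + 2) / 2 = 2 * j * (j + 1) := by
    have e : b2 * (b2 + 2) = 2 * (2 * j * (j + 1)) := by subst hj; ring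
    rw [e, Int.mul_ediv_cancel_left _ two_ne_zero]
  have hNpos : (0 : ℤ) < N := by
    rw [hN]
    have h0 : (0:ℤ) < b1 := hb1
    have := mul_pos (mul_pos (mul_pos h0 (by linarith : (0:ℤ) < b1 + 1))
      (by linarith : (0:ℤ) < b1 + 2)) (by linarith : (0:ℤ) < b1 + 3)
    linarith
  have hNR : (0 : ℝ) < (N : ℝ) := by exact_mod_cast hNpos
  obtain ⟨r, hrdef⟩ : ∃ r : ℝ, (N : ℝ) ^ ((1 : ℝ) / 4) = r := ⟨_, rfl⟩
  rw [hrdef]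
  have hr : 0 < r := hrdef ▸ Real.rpow_pos_of_pos hNR _
  have hr4 : r ^ 4 = (N : ℝ) := by
    rw [← hrdef, ← Real.rpow_natCast ((N:ℝ) ^ ((1:ℝ)/4)) 4, ← Real.rpow_mul hNR.le]
    norm_num
  have hr2 : r ^ 2 = Real.sqrt (N : ℝ) := by
    rw [Real.sqrt_eq_rpow, ← hrdef, ← Real.rpow_natCast ((N:ℝ) ^ ((1:ℝ)/4)) 2,
      ← Real.rpow_mul hNR.le]
    norm_num
  have hs2 : Real.sqrt 2 ^ 2 = 2 := Real.sq_sqrt (by norm_num)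
  have hs2pos : 0 < Real.sqrt 2 := Real.sqrt_pos.mpr (by norm_num)
  have hjR : (1 : ℝ) ≤ (j : ℝ) := by exact_mod_cast hj1
  -- sqrt N < m + 1
  have hsm : Real.sqrt (N : ℝ) < (b1 : ℝ) ^ 2 + 3 * b1 + 1 := by
    rw [show ((b1:ℝ)^2 + 3*b1 + 1) = (((b1^2 + 3*b1 + 1 : ℤ)):ℝ) by push_cast; ring]
    rw [Real.sqrt_lt' (by exact_mod_cast (by nlinarith : (0:ℤ) < b1^2+3*b1+1))]
    have : N < (b1^2 + 3*b1 + 1)^2 := by rw [hN]; nlinarith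
    exact_mod_cast this
  have hb1R : (1:ℝ) ≤ (b1 : ℝ) := by exact_mod_cast hb1
  have keyR : (b1:ℝ) ^ 2 + 3 * b1 = 2 * ((j:ℝ) + 1) ^ 2 - 2 := by exact_mod_cast key
  have hNmR : (N : ℝ) = ((b1:ℝ)^2 + 3*b1) * ((b1:ℝ)^2 + 3*b1 + 2) := by
    rw [hN]; push_cast; ring
  -- lower bound: sqrt 2 * r < 2j + 2
  have hlow : Real.sqrt 2 * r < 2 * (j : ℝ) + 2 := by
    have h4 : (Real.sqrt 2 * r) ^ 4 < (2 * (j : ℝ) + 2) ^ 4 := by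
      have e1 : (Real.sqrt 2 * r) ^ 4 = 4 * (N : ℝ) := by
        rw [mul_pow]; rw [show Real.sqrt 2 ^ 4 = (Real.sqrt 2 ^ 2)^2 by ring, hs2, hr4]
        norm_num
      rw [e1]
      have hZ : (2 * j + 2) ^ 4 - 4 * N = 8 * (b1 ^ 2 + 3 * b1) + 16 := by
        rw [hN]; linear_combination (-4 * (b1 ^ 2 + 3 * b1 + 2 + 2 * (j + 1) ^ 2)) * key
      have hZ2 : 4 * N < (2 * j + 2) ^ 4 := by nlinarith [hZ, hb1]
      have := (by exact_mod_cast hZ2 : 4 * (N:ℝ) < (2 * (j:ℝ) + 2) ^ 4)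
      linarith
    exact lt_of_pow_lt_pow_left₀ 4 (by positivity) h4
  -- upper bound squared: (2j+2)*r < sqrt 2 * (r^2+1)
  have hup : (2 * (j : ℝ) + 2) * r < Real.sqrt 2 * (r ^ 2 + 1) := by
    have hsq : ((2 * (j : ℝ) + 2) * r) ^ 2 < (Real.sqrt 2 * (r ^ 2 + 1)) ^ 2 := by
      have e1 : ((2 * (j : ℝ) + 2) * r) ^ 2 = (2*(j:ℝ)+2)^2 * Real.sqrt (N:ℝ) := by
        rw [mul_pow, hr2]
      have e2 : (Real.sqrt 2 * (r ^ 2 + 1)) ^ 2 = 2 * (Real.sqrt (N:ℝ) + 1)^2 := by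
        rw [mul_pow, hs2, hr2]
      rw [e1, e2]
      have hsnn : 0 ≤ Real.sqrt (N:ℝ) := Real.sqrt_nonneg _
      have hsN : Real.sqrt (N:ℝ) ^ 2 = (N:ℝ) := Real.sq_sqrt hNR.le
      have hv : (2 * (j:ℝ) + 2) ^ 2 = 2 * ((b1:ℝ) ^ 2 + 3 * b1) + 4 := by
        linear_combination -2 * keyR
      have hm : (0:ℝ) < (b1:ℝ) ^ 2 + 3 * b1 := by nlinarith [hb1R]
      have hms := mul_lt_mul_of_pos_left hsm hm
      rw [hv]
      linarith [hms, hm, hsN, hNmR]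
    exact lt_of_pow_lt_pow_left₀ 2 (by positivity) hsq
  have hUB : ((2 * (b2 + 2) : ℤ) : ℝ) < 2 * Real.sqrt 2 * r + 2 * Real.sqrt 2 / r := by
    have hcast : ((2 * (b2 + 2) : ℤ) : ℝ) = 4 * (j:ℝ) + 4 := by
      subst hj; push_cast; ring
    rw [hcast]
    obtain ⟨t, htdef⟩ : ∃ t : ℝ, 2 * Real.sqrt 2 / r = t := ⟨_, rfl⟩
    rw [htdef]
    have ht : t * r = 2 * Real.sqrt 2 := by rw [← htdef]; field_simp
    by_contra h
    push_neg at h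
    have h2 := mul_le_mul_of_nonneg_right h hr.le
    have e : (2 * Real.sqrt 2 * r + t) * r = 2 * Real.sqrt 2 * r ^ 2 + 2 * Real.sqrt 2 := by
      rw [add_mul, mul_assoc, ← sq, ht]
    rw [e] at h2
    linarith [h2, hup]
  refine ⟨⟨j, hj⟩, ?_, ?_, ?_, ?_, ?_, ?_, ?_, ?_, hUB, ?_⟩
  · rw [hN]; ring
  · rw [hN]; ring
  · rw [hd1, hd2, hN]
    linear_combination (-(b1 ^ 2 + 3 * b1) - 2 * (j + 1) ^ 2) * key
  · rw [show (((b1 + 1) * (b1 + 2) : ℤ) : ℝ) = (b1:ℝ)^2 + 3*b1 + 2 by push_cast; ring]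
    linarith [hsm]
  · linarith [hb1]
  · rw [hd1]; nlinarith [key, hj1, hb1, sq_nonneg (b1 - 2 * j - 1), sq_nonneg (b1 - 2 * j)]
  · rw [hd1, hd2]; subst hj; ring
  · have hcast : ((2 * (b2 + 2) : ℤ) : ℝ) = 4 * (j:ℝ) + 4 := by
      subst hj; push_cast; ring
    rw [hcast]; linarith [hlow]
  · intro hN20
    have hN20R : (2:ℝ)^20 ≤ (N:ℝ) := by exact_mod_cast hN20
    have h324 : (32:ℝ)^4 ≤ r ^ 4 := by rw [hr4]; norm_num; linarith
    have hr32 : (32:ℝ) ≤ r := le_of_pow_le_pow_left₀ (by norm_num) hr.le h324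
    have hsqrt16 : Real.sqrt 2 < 1.6 := by
      nlinarith [hs2, Real.sqrt_nonneg 2]
    have hdiv : 2 * Real.sqrt 2 / r ≤ 2 * Real.sqrt 2 / 32 :=
      div_le_div_of_nonneg_left (by positivity) (by norm_num) hr32
    have : 2 * Real.sqrt 2 / 32 < 0.1 := by
      rw [div_lt_iff₀ (by norm_num : (0:ℝ) < 32)]; nlinarith [hsqrt16, hs2pos]
    calc ((2 * (b2 + 2) : ℤ) : ℝ) < 2 * Real.sqrt 2 * r + 2 * Real.sqrt 2 / r := hUB
      _ ≤ 2 * Real.sqrt 2 * r + 2 * Real.sqrt 2 / 32 := by linarith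
      _ < 2 * Real.sqrt 2 * r + 0.1 := by linarith
end
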